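/- arXiv:1102.2077 — 2 statements merged into one kernel-verified Lean document; each statement's English description precedes it below -/
import Mathlib

section
/- Let G be a real n×n matrix and v ∈ ℝⁿ such that det(1 + G·diag(v)) ≠ 0. Then ∑_{k=1}^n ∑_{ℓ=1}^n v_k · ((1 + G·diag(v))^{-1})_{k,ℓ} = (∑_{I⊆{1,…,n}} c_I v_I) / (∑_{I⊆{1,…,n}} g_I v_I). -/
/-!
Put `A = 1 + G diag(v)`, so that the left-hand side is `vᵀ A⁻¹ 𝟙 = vᵀ adj(A) 𝟙 / det A`.
Expanding `det (1 + M diag(v))` into principal minors gives `det A = ∑ g_I v_I`. The rank-one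
update formula `det (B + u wᵀ) = det B + wᵀ adj(B) u` shows on the one hand that
`det (A + 𝟙 vᵀ) = det A + vᵀ adj(A) 𝟙`, and on the other hand, applied to each `G_I`, that the
principal minors of `G + 𝟙 𝟙ᵀ` are `g_I + c_I`. Since `A + 𝟙 vᵀ = 1 + (G + 𝟙 𝟙ᵀ) diag(v)`,
comparing the two expansions gives `vᵀ adj(A) 𝟙 = ∑ c_I v_I`.
-/

open Matrix

/-- `g_I = det (G_I)`, the determinant of the submatrix of `G` indexed by `I × I`
(with `g_∅ = 1`). -/
noncomputable def gI {n : ℕ} (G : Matrix (Fin n) (Fin n) ℝ) (I : Finset (Fin n)) : ℝ :=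
  (G.submatrix (Subtype.val : {x // x ∈ I} → Fin n)
    (Subtype.val : {x // x ∈ I} → Fin n)).det

/-- The cofactor matrix of a square matrix: the transpose of its adjugate. -/
noncomputable def cofactor {m : Type*} [Fintype m] [DecidableEq m]
    (M : Matrix m m ℝ) : Matrix m m ℝ :=
  (Matrix.adjugate M)ᵀ

/-- `c_I`, the sum of all entries of the cofactor matrix of `G_I` (with `c_∅ = 0`). -/
noncomputable def cI {n : ℕ} (G : Matrix (Fin n) (Fin n) ℝ) (I : Finset (Fin n)) : ℝ :=
  ∑ k : {x // x ∈ I}, ∑ l : {x // x ∈ I},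
    cofactor (G.submatrix (Subtype.val : {x // x ∈ I} → Fin n)
      (Subtype.val : {x // x ∈ I} → Fin n)) k l

namespace Matrix

variable {m R : Type*} [Fintype m] [DecidableEq m] [CommRing R]

theorem submatrix_mul_diagonal (M : Matrix m m R) (v : m → R) {k : Type*} [Fintype k]
    [DecidableEq k] (r c : k → m) :
    (M * diagonal v).submatrix r c = M.submatrix r c * diagonal (v ∘ c) := by
  ext i j
  simp

omit [Fintype m] [DecidableEq m] in
theorem submatrix_vecMulVec {k l : Type*} (u w : m → R) (r : k → m) (c : l → m) :
    (vecMulVec u w).submatrix r c = vecMulVec (u ∘ r) (w ∘ c) :=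
  rfl

theorem det_one_add_eq_sum_det_submatrix (M : Matrix m m R) :
    (1 + M).det = ∑ s : Finset m, (M.submatrix ((↑) : s → m) (↑)).det := by
  rw [add_comm]
  exact (detRowAlternating.map_add_univ M.row (1 : Matrix m m R).row).trans
    (Finset.sum_congr rfl fun s _ => det_piecewise_one_eq_submatrix_det M s)

theorem det_one_add_mul_diagonal_eq_sum (M : Matrix m m R) (v : m → R) :
    (1 + M * diagonal v).det =
      ∑ s : Finset m, (M.submatrix ((↑) : s → m) (↑)).det * ∏ i ∈ s, v i := by
  rw [det_one_add_eq_sum_det_submatrix]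
  refine Finset.sum_congr rfl fun s _ => ?_
  rw [submatrix_mul_diagonal, det_mul, det_diagonal]
  exact congrArg _ (Finset.prod_coe_sort s v)

theorem det_eq_zero_of_rows_eq_smul {M : Matrix m m R} {i j : m} (hij : i ≠ j) {a b : R}
    {w : m → R} (hi : M i = a • w) (hj : M j = b • w) : M.det = 0 := by
  have hM : M.det = a * (M.updateRow i w).det := by
    rw [← det_updateRow_smul, ← hi, updateRow_eq_self]
  have hN : (M.updateRow i w).det = b * ((M.updateRow i w).updateRow j w).det := by
    have hj' : M.updateRow i w j = b • w := (updateRow_ne hij.symm).trans hj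
    rw [← det_updateRow_smul, ← hj', updateRow_eq_self]
  rw [hM, hN, det_zero_of_row_eq hij (by simp [updateRow_ne hij]), mul_zero, mul_zero]

theorem det_add_vecMulVec (A : Matrix m m R) (u w : m → R) :
    (A + vecMulVec u w).det = A.det + w ⬝ᵥ (A.adjugate *ᵥ u) := by
  have hrow : ∀ s : Finset m, ∀ i ∈ s, s.piecewise (vecMulVec u w).row A.row i = u i • w :=
    fun s i hi => Finset.piecewise_eq_of_mem _ _ _ hi
  have hvanish : ∀ s : Finset m, 2 ≤ s.card →
      detRowAlternating.toMultilinearMap (s.piecewise (vecMulVec u w).row A.row) = 0 := by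
    intro s hs
    obtain ⟨i, hi, j, hj, hij⟩ := Finset.one_lt_card.mp hs
    exact det_eq_zero_of_rows_eq_smul hij (hrow s i hi) (hrow s j hj)
  have hlin : ∀ i, (A.updateRow i (vecMulVec u w i)).det = u i * (A.updateRow i w).det :=
    fun i => det_updateRow_smul A i (u i) w
  -- Expand multilinearly in the rows: terms taking two rows from `u wᵀ` vanish, and the
  -- linear terms are Cramer determinants.
  change detRowAlternating.toMultilinearMap (A.row + (vecMulVec u w).row) = _
  rw [MultilinearMap.map_add_eq_map_add_linearDeriv_add, Finset.sum_eq_zero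
    (fun s hs => hvanish s (Finset.mem_filter.mp hs).2), add_zero,
    MultilinearMap.linearDeriv_apply]
  congr 1
  calc ∑ i, (A.updateRow i (vecMulVec u w i)).det = ∑ i, u i * cramer Aᵀ w i := by
        simp only [hlin, cramer_transpose_apply]
    _ = w ⬝ᵥ (A.adjugate *ᵥ u) := by
        rw [← dotProduct, cramer_eq_adjugate_mulVec, ← adjugate_transpose, mulVec_transpose,
          dotProduct_comm, dotProduct_mulVec]

end Matrix

theorem gI_add_cI {n : ℕ} (G : Matrix (Fin n) (Fin n) ℝ) (I : Finset (Fin n)) :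
    gI G I + cI G I =
      ((G + vecMulVec 1 1).submatrix (Subtype.val : I → Fin n) Subtype.val).det := by
  rw [submatrix_add, Pi.add_apply, Pi.add_apply, submatrix_vecMulVec, Pi.one_comp,
    det_add_vecMulVec, gI, cI]
  simp only [cofactor, transpose_apply, dotProduct, mulVec, Pi.one_apply, one_mul, mul_one]
  exact congrArg _ Finset.sum_comm

theorem inv_quadratic_form_eq_general (n : ℕ) (G : Matrix (Fin n) (Fin n) ℝ) (v : Fin n → ℝ) :
    ∑ k : Fin n, ∑ l : Fin n, v k * (1 + G * Matrix.diagonal v)⁻¹ k l =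
      (∑ I : Finset (Fin n), cI G I * ∏ i ∈ I, v i) /
        (∑ I : Finset (Fin n), gI G I * ∏ i ∈ I, v i) := by
  set A := 1 + G * Matrix.diagonal v
  have hden : ∑ I : Finset (Fin n), gI G I * ∏ i ∈ I, v i = A.det :=
    (det_one_add_mul_diagonal_eq_sum G v).symm
  have hnum : ∑ I : Finset (Fin n), cI G I * ∏ i ∈ I, v i = v ⬝ᵥ (A.adjugate *ᵥ 1) := by
    have hA : A + vecMulVec 1 v = 1 + (G + vecMulVec 1 1) * diagonal v := by
      ext i j
      simp [A, add_mul, add_assoc]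
    have h := det_add_vecMulVec A 1 v
    rw [hA, det_one_add_mul_diagonal_eq_sum, ← hden] at h
    simp only [← gI_add_cI, add_mul, Finset.sum_add_distrib] at h
    linarith
  have hlhs : ∑ k, ∑ l, v k * A⁻¹ k l = v ⬝ᵥ (A⁻¹ *ᵥ 1) := by
    simp [dotProduct, mulVec, Finset.mul_sum]
  rw [hlhs, hnum, hden, inv_def, Ring.inverse_eq_inv, smul_mulVec, dotProduct_smul, smul_eq_mul,
    div_eq_inv_mul]

/-- If `det(1 + G diag(v)) ≠ 0`, then
`∑_{k,ℓ} v_k ((1 + G diag(v))⁻¹)_{k,ℓ} = (∑_I c_I v_I) / (∑_I g_I v_I)`. -/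
theorem inv_quadratic_form_eq (n : ℕ) (G : Matrix (Fin n) (Fin n) ℝ) (v : Fin n → ℝ)
    (hdet : (1 + G * Matrix.diagonal v).det ≠ 0) :
    ∑ k : Fin n, ∑ l : Fin n, v k * (1 + G * Matrix.diagonal v)⁻¹ k l =
      (∑ I : Finset (Fin n), cI G I * ∏ i ∈ I, v i) /
        (∑ I : Finset (Fin n), gI G I * ∏ i ∈ I, v i) :=
  inv_quadratic_form_eq_general n G v
end

section
/- For every y ∈ ℤ² there exists a function ψ_y : ℕ → [0,∞) with lim_{r→∞} ψ_y(r) = 0, independent of N, such that for every integer N > 1 and every z ∈ {1,…,N}, setting x = (0,z) ∈ J₀: 0 ≤ (3/2)·a(y) − (∑_{x'∈J₀} g(x,x') − ∑_{x''∈J_y} g(x,x'')) ≤ ψ_y(min(z, N+1−z)). -/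
open Filter

/-- `srw3 n x` is the probability that discrete-time simple random walk on
`ℤ³ = (ℤ × ℤ) × ℤ` started at `0` is at `x` at time `n`. -/
noncomputable def srw3 : ℕ → (ℤ × ℤ) × ℤ → ℝ
  | 0, x => if x = 0 then 1 else 0
  | n + 1, x =>
      (srw3 n (x + ((1, 0), 0)) + srw3 n (x - ((1, 0), 0)) +
        srw3 n (x + ((0, 1), 0)) + srw3 n (x - ((0, 1), 0)) +
        srw3 n (x + ((0, 0), 1)) + srw3 n (x - ((0, 0), 1))) / 6

/-- The Green function of simple random walk on `ℤ³`:
`g(x) = ∑_{n ≥ 0} P₀[Xₙ = x]`, so that `g(x,x') = green3 (x' - x)`. -/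
noncomputable def green3 (x : (ℤ × ℤ) × ℤ) : ℝ := ∑' n : ℕ, srw3 n x

/-- `J = {1, …, N} ⊆ ℤ`. -/
noncomputable def JN (N : ℕ) : Finset ℤ := Finset.Icc (1 : ℤ) (N : ℤ)

/-- `srw2 n y` is the probability that discrete-time simple random walk on `ℤ²`
started at `0` is at `y` at time `n`. -/
noncomputable def srw2 : ℕ → ℤ × ℤ → ℝ
  | 0, y => if y = 0 then 1 else 0
  | n + 1, y =>
      (srw2 n (y + (1, 0)) + srw2 n (y - (1, 0)) +
        srw2 n (y + (0, 1)) + srw2 n (y - (0, 1))) / 4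

/-- The potential kernel of two-dimensional simple random walk:
`a(y) = lim_n ∑_{j=0}^n (P₀[Xⱼ = 0] - P₀[Xⱼ = y])`. -/
noncomputable def aker (y : ℤ × ℤ) : ℝ :=
  limUnder atTop (fun n : ℕ => ∑ j ∈ Finset.range (n + 1), (srw2 j 0 - srw2 j y))

/-!
Fourier inversion on the torus `[-π, π]³` writes `g(w, k)` as
`(2π)⁻³ ∫ cos (w · θ) K_k(θ) dθ` over the transverse frequencies `θ ∈ [-π, π]²`, where the
remaining integral over the frequency `t` along the rod is the Poisson-kernel integral
`∫ cos (k t) / (κ - cos t) dt = 2π ρ^|k| / √(κ² - 1)`, with `κ(θ) = 3 - cos θ₁ - cos θ₂` and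
`ρ = κ - √(κ² - 1) ∈ (0, 1)`. Hence `d_k = g(0, k) - g(y, k)` is the integral of the nonnegative
function `(1 - cos (y · θ)) K_k(θ)`, and summing the geometric series in `k ∈ ℤ` gives
`∑ₖ K_k = 6π / (κ - 1) = 3π / (1 - φ₂)`, where `φ₂` is the characteristic function of a step of
the planar walk: this is `3/2` times the Fourier integrand of the potential kernel `a(y)`.
So the `d_k` are nonnegative with total `(3/2) a(y)`. For `x = (0, z)` the rod `J₀` contains all
heights `z + k` with `|k| < r = min(z, N + 1 - z)`, and `ψ(r)` is the tail
`(3/2) a(y) - ∑_{|k| < r} d_k`.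
-/

open MeasureTheory Real Set Filter Topology

noncomputable section

namespace RodPotential

/-! ### Fourier analysis on the torus -/

def torus1 : Measure ℝ := volume.restrict (Ioc (-π) π)

def torus2 : Measure (ℝ × ℝ) := torus1.prod torus1

def torus3 : Measure ((ℝ × ℝ) × ℝ) := torus2.prod torus1

instance : IsFiniteMeasure torus1 := ⟨by simp [torus1]⟩

instance : IsFiniteMeasure torus2 := by unfold torus2; infer_instance

instance : IsFiniteMeasure torus3 := by unfold torus3; infer_instance

lemma integral_torus1 (f : ℝ → ℝ) : ∫ t, f t ∂torus1 = ∫ t in (-π)..π, f t :=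
  (intervalIntegral.integral_of_le (by linarith [pi_pos])).symm

lemma integrable_torus1_iff {f : ℝ → ℝ} :
    Integrable f torus1 ↔ IntervalIntegrable f volume (-π) π :=
  (intervalIntegrable_iff_integrableOn_Ioc_of_le (by linarith [pi_pos])).symm

lemma integral_cos_add_int_mul (φ : ℝ) (m : ℤ) :
    ∫ t in (-π)..π, cos (φ + m * t) = if m = 0 then 2 * π * cos φ else 0 := by
  split_ifs with hm
  · simp only [hm, Int.cast_zero, zero_mul, add_zero, intervalIntegral.integral_const,
      smul_eq_mul]
    ring
  · have hm' : (m : ℝ) ≠ 0 := Int.cast_ne_zero.mpr hm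
    simp_rw [add_comm φ]
    rw [intervalIntegral.integral_comp_mul_add cos hm', integral_cos,
      show (m : ℝ) * -π + φ = φ - m * π by ring, add_comm, sin_add, sin_sub, sin_int_mul_pi]
    simp

lemma integral_prod_torus1_cos_add {X : Type*} [MeasurableSpace X] (ν : Measure X)
    [IsFiniteMeasure ν] {f : X → ℝ} (hf : Measurable f) (m : ℤ) :
    ∫ p, cos (f p.1 + m * p.2) ∂ν.prod torus1 =
      if m = 0 then 2 * π * ∫ x, cos (f x) ∂ν else 0 := by
  have hint : Integrable (fun p : X × ℝ => cos (f p.1 + m * p.2)) (ν.prod torus1) :=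
    .of_bound (by fun_prop) 1 (ae_of_all _ fun p => by simpa using abs_cos_le_one _)
  rw [integral_prod _ hint]
  simp_rw [integral_torus1, integral_cos_add_int_mul]
  split_ifs <;> simp [integral_const_mul]

lemma integral_torus1_even_mul_cos_add {f : ℝ → ℝ} (hf : Continuous f)
    (heven : ∀ t, f (-t) = f t) (a b : ℝ) :
    ∫ t, f t * cos (a + b * t) ∂torus1 = cos a * ∫ t, f t * cos (b * t) ∂torus1 := by
  have hodd : ∫ t in (-π)..π, f t * sin (b * t) = 0 := by
    have := intervalIntegral.integral_comp_neg (a := -π) (b := π) fun t => f t * sin (b * t)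
    simp only [neg_neg, heven, mul_neg, sin_neg, intervalIntegral.integral_neg] at this
    linarith
  have hexpand : ∀ t, f t * cos (a + b * t) =
      cos a * (f t * cos (b * t)) - sin a * (f t * sin (b * t)) := fun t => by
    rw [cos_add]; ring
  simp_rw [integral_torus1, hexpand]
  rw [intervalIntegral.integral_sub (Continuous.intervalIntegrable (by fun_prop) _ _)
      (Continuous.intervalIntegrable (by fun_prop) _ _),
    intervalIntegral.integral_const_mul, intervalIntegral.integral_const_mul, hodd]
  ring

lemma integrable_pow_mul_cos {X : Type*} [TopologicalSpace X] [MeasurableSpace X]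
    [OpensMeasurableSpace X] (ν : Measure X) [IsFiniteMeasure ν] {F g : X → ℝ}
    (hF : Continuous F) (hF1 : ∀ x, |F x| ≤ 1) (hg : Continuous g) (n : ℕ) :
    Integrable (fun x => F x ^ n * cos (g x)) ν := by
  refine .of_bound (by fun_prop) 1 (ae_of_all _ fun x => ?_)
  rw [norm_mul, norm_pow]
  exact mul_le_one₀ (pow_le_one₀ (norm_nonneg _) (hF1 x)) (norm_nonneg _) (abs_cos_le_one _)

def dot2 (y : ℤ × ℤ) (θ : ℝ × ℝ) : ℝ := y.1 * θ.1 + y.2 * θ.2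

def dot3 (x : (ℤ × ℤ) × ℤ) (ξ : (ℝ × ℝ) × ℝ) : ℝ := dot2 x.1 ξ.1 + x.2 * ξ.2

@[fun_prop]
lemma continuous_dot2 (y : ℤ × ℤ) : Continuous (dot2 y) := by unfold dot2; fun_prop

@[fun_prop]
lemma continuous_dot3 (x : (ℤ × ℤ) × ℤ) : Continuous (dot3 x) := by unfold dot3; fun_prop

lemma dot2_add (y y' : ℤ × ℤ) (θ : ℝ × ℝ) : dot2 (y + y') θ = dot2 y θ + dot2 y' θ := by
  simp only [dot2, Prod.fst_add, Prod.snd_add]; push_cast; ring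

lemma dot2_sub (y y' : ℤ × ℤ) (θ : ℝ × ℝ) : dot2 (y - y') θ = dot2 y θ - dot2 y' θ := by
  simp only [dot2, Prod.fst_sub, Prod.snd_sub]; push_cast; ring

lemma dot3_add (x x' : (ℤ × ℤ) × ℤ) (ξ : (ℝ × ℝ) × ℝ) :
    dot3 (x + x') ξ = dot3 x ξ + dot3 x' ξ := by
  simp only [dot3, Prod.fst_add, Prod.snd_add, dot2_add]; push_cast; ring

lemma dot3_sub (x x' : (ℤ × ℤ) × ℤ) (ξ : (ℝ × ℝ) × ℝ) :
    dot3 (x - x') ξ = dot3 x ξ - dot3 x' ξ := by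
  simp only [dot3, Prod.fst_sub, Prod.snd_sub, dot2_sub]; push_cast; ring

lemma integral_cos_dot2 (y : ℤ × ℤ) :
    ∫ θ, cos (dot2 y θ) ∂torus2 = if y = 0 then (2 * π) ^ 2 else 0 := by
  have h1 : ∫ t, cos (y.1 * t) ∂torus1 = if y.1 = 0 then 2 * π else 0 := by
    simpa [integral_torus1] using integral_cos_add_int_mul 0 y.1
  simp only [torus2, dot2]
  rw [integral_prod_torus1_cos_add torus1 (f := fun t => (y.1 : ℝ) * t) (by fun_prop), h1]
  rcases y with ⟨a, b⟩
  by_cases ha : a = 0 <;> by_cases hb : b = 0 <;>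
    simp only [ha, hb, ↓reduceIte, Prod.mk_eq_zero, and_self, and_false, and_true, mul_zero]
  ring

lemma integral_cos_dot3 (x : (ℤ × ℤ) × ℤ) :
    ∫ ξ, cos (dot3 x ξ) ∂torus3 = if x = 0 then (2 * π) ^ 3 else 0 := by
  simp only [torus3, dot3]
  rw [integral_prod_torus1_cos_add torus2 (continuous_dot2 x.1).measurable, integral_cos_dot2]
  rcases x with ⟨a, b⟩
  by_cases ha : a = 0 <;> by_cases hb : b = 0 <;>
    simp only [ha, hb, ↓reduceIte, Prod.mk_eq_zero, and_self, and_false, and_true, mul_zero]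
  ring

def charFun2 (θ : ℝ × ℝ) : ℝ := (cos θ.1 + cos θ.2) / 2

def charFun3 (ξ : (ℝ × ℝ) × ℝ) : ℝ := (cos ξ.1.1 + cos ξ.1.2 + cos ξ.2) / 3

@[fun_prop]
lemma continuous_charFun2 : Continuous charFun2 := by unfold charFun2; fun_prop

@[fun_prop]
lemma continuous_charFun3 : Continuous charFun3 := by unfold charFun3; fun_prop

lemma abs_charFun2_le_one (θ : ℝ × ℝ) : |charFun2 θ| ≤ 1 := by
  rw [abs_le, charFun2]
  constructor <;> linarith [neg_one_le_cos θ.1, cos_le_one θ.1, neg_one_le_cos θ.2,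
    cos_le_one θ.2]

lemma abs_charFun3_le_one (ξ : (ℝ × ℝ) × ℝ) : |charFun3 ξ| ≤ 1 := by
  rw [abs_le, charFun3]
  constructor <;> linarith [neg_one_le_cos ξ.1.1, cos_le_one ξ.1.1, neg_one_le_cos ξ.1.2,
    cos_le_one ξ.1.2, neg_one_le_cos ξ.2, cos_le_one ξ.2]

lemma charFun2_mul_cos_dot2 (y : ℤ × ℤ) (θ : ℝ × ℝ) :
    charFun2 θ * cos (dot2 y θ) =
      (cos (dot2 (y + (1, 0)) θ) + cos (dot2 (y - (1, 0)) θ) +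
        cos (dot2 (y + (0, 1)) θ) + cos (dot2 (y - (0, 1)) θ)) / 4 := by
  simp only [dot2_add, dot2_sub, cos_add, cos_sub, charFun2]
  simp only [dot2, Int.cast_one, Int.cast_zero, one_mul, zero_mul, add_zero, zero_add]
  ring

lemma charFun3_mul_cos_dot3 (x : (ℤ × ℤ) × ℤ) (ξ : (ℝ × ℝ) × ℝ) :
    charFun3 ξ * cos (dot3 x ξ) =
      (cos (dot3 (x + ((1, 0), 0)) ξ) + cos (dot3 (x - ((1, 0), 0)) ξ) +
        cos (dot3 (x + ((0, 1), 0)) ξ) + cos (dot3 (x - ((0, 1), 0)) ξ) +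
        cos (dot3 (x + ((0, 0), 1)) ξ) + cos (dot3 (x - ((0, 0), 1)) ξ)) / 6 := by
  simp only [dot3_add, dot3_sub, cos_add, cos_sub, charFun3]
  simp only [dot3, dot2, Int.cast_one, Int.cast_zero, one_mul, zero_mul, add_zero, zero_add]
  ring

lemma srw2_eq_integral (n : ℕ) (y : ℤ × ℤ) :
    srw2 n y = ((2 * π) ^ 2)⁻¹ * ∫ θ, charFun2 θ ^ n * cos (dot2 y θ) ∂torus2 := by
  induction n generalizing y with
  | zero =>
    simp only [srw2, pow_zero, one_mul, integral_cos_dot2]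
    split_ifs <;> simp [pi_ne_zero]
  | succ n ih =>
    have hint (y' : ℤ × ℤ) := integrable_pow_mul_cos torus2 continuous_charFun2
      abs_charFun2_le_one (continuous_dot2 y') n
    simp_rw [srw2, ih, pow_succ, mul_assoc, charFun2_mul_cos_dot2, mul_div_assoc', mul_add]
    rw [integral_div, integral_add, integral_add, integral_add]
    · ring
    all_goals repeat' first | exact hint _ | apply Integrable.fun_add

lemma srw3_eq_integral (n : ℕ) (x : (ℤ × ℤ) × ℤ) :
    srw3 n x = ((2 * π) ^ 3)⁻¹ * ∫ ξ, charFun3 ξ ^ n * cos (dot3 x ξ) ∂torus3 := by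
  induction n generalizing x with
  | zero =>
    simp only [srw3, pow_zero, one_mul, integral_cos_dot3]
    split_ifs <;> simp [pi_ne_zero]
  | succ n ih =>
    have hint (x' : (ℤ × ℤ) × ℤ) := integrable_pow_mul_cos torus3 continuous_charFun3
      abs_charFun3_le_one (continuous_dot3 x') n
    simp_rw [srw3, ih, pow_succ, mul_assoc, charFun3_mul_cos_dot3, mul_div_assoc', mul_add]
    rw [integral_div, integral_add, integral_add, integral_add, integral_add, integral_add]
    · ring
    all_goals repeat' first | exact hint _ | apply Integrable.fun_add

lemma srw3_nonneg (n : ℕ) (x : (ℤ × ℤ) × ℤ) : 0 ≤ srw3 n x := by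
  induction n generalizing x with
  | zero => rw [srw3]; split_ifs <;> norm_num
  | succ n ih =>
    rw [srw3]
    have := ih (x + ((1, 0), 0)); have := ih (x - ((1, 0), 0))
    have := ih (x + ((0, 1), 0)); have := ih (x - ((0, 1), 0))
    have := ih (x + ((0, 0), 1)); have := ih (x - ((0, 0), 1))
    positivity

/-! ### The Poisson integral `∫ cos (j t) / (c - cos t) dt` -/

lemma eq_pow_mul_of_bounded_recurrence {u : ℕ → ℝ} {ρ C : ℝ} (hρ₀ : 0 < ρ) (hρ₁ : ρ < 1)
    (hrec : ∀ j, u (j + 2) + u j = (ρ + ρ⁻¹) * u (j + 1)) (hC : ∀ j, |u j| ≤ C) (j : ℕ) :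
    u j = ρ ^ j * u 0 := by
  -- `e j = u (j + 1) - ρ u j` is multiplied by `ρ⁻¹ > 1` at each step, yet stays bounded.
  set e : ℕ → ℝ := fun j => u (j + 1) - ρ * u j
  have he : ∀ j, e 0 = ρ ^ j * e j := by
    intro j
    induction j with
    | zero => simp
    | succ j ih =>
      have : e j = ρ * e (j + 1) := by
        simp only [e]
        linear_combination (-ρ) * hrec j - u (j + 1) * mul_inv_cancel₀ hρ₀.ne'
      rw [ih, this]; ring
  have he0 : e 0 = 0 := by
    have hbound : ∀ j, |e 0| ≤ ρ ^ j * (2 * C) := fun j => by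
      rw [he j, abs_mul, abs_of_pos (pow_pos hρ₀ j)]
      gcongr
      calc |e j| ≤ |u (j + 1)| + ρ * |u j| := by
            simpa [abs_mul, abs_of_pos hρ₀] using abs_sub (u (j + 1)) (ρ * u j)
        _ ≤ 2 * C := by nlinarith [hC j, hC (j + 1), abs_nonneg (u j)]
    have hlim : Tendsto (fun j => ρ ^ j * (2 * C)) atTop (𝓝 0) := by
      simpa using (tendsto_pow_atTop_nhds_zero_of_lt_one hρ₀.le hρ₁).mul_const (2 * C)
    exact abs_nonpos_iff.mp (ge_of_tendsto' hlim hbound)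
  induction j with
  | zero => simp
  | succ j ih =>
    have : e j = 0 := by
      simpa [he0, (pow_pos hρ₀ j).ne'] using (he j).symm
    simp only [e] at this
    rw [pow_succ, mul_comm (ρ ^ j), mul_assoc, ← ih]
    linarith

lemma abs_geom_sum_le {x : ℝ} (h₀ : -1 ≤ x) (h₁ : x < 1) (M : ℕ) :
    |∑ i ∈ Finset.range M, x ^ i| ≤ 2 / (1 - x) := by
  rw [geom_sum_eq h₁.ne, abs_div, abs_of_neg (by linarith : x - 1 < 0), neg_sub]
  refine div_le_div_of_nonneg_right ?_ (by linarith)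
  have : |x ^ M| ≤ 1 := by
    rw [abs_pow]; exact pow_le_one₀ (abs_nonneg x) (abs_le.mpr ⟨h₀, h₁.le⟩)
  calc |x ^ M - 1| ≤ |x ^ M| + |1| := abs_sub _ _
    _ ≤ 2 := by rw [abs_one]; linarith

def smallRoot (c : ℝ) : ℝ := c - √(c ^ 2 - 1)

def poissonCoeff (c : ℝ) (j : ℕ) : ℝ := ∫ t in (-π)..π, cos (j * t) / (c - cos t)

@[fun_prop]
lemma continuous_smallRoot : Continuous smallRoot := by unfold smallRoot; fun_prop

section PoissonIntegral

variable {c : ℝ}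

lemma sqrt_sq_sub_one_pos (hc : 1 < c) : 0 < √(c ^ 2 - 1) :=
  sqrt_pos.mpr (by nlinarith)

lemma sq_sqrt_sq_sub_one (hc : 1 < c) : √(c ^ 2 - 1) ^ 2 = c ^ 2 - 1 :=
  sq_sqrt (by nlinarith)

lemma smallRoot_pos (hc : 1 < c) : 0 < smallRoot c := by
  have := sq_sqrt_sq_sub_one hc
  have := sqrt_sq_sub_one_pos hc
  rw [smallRoot]; nlinarith

lemma smallRoot_lt_one (hc : 1 < c) : smallRoot c < 1 := by
  have := sq_sqrt_sq_sub_one hc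
  have := sqrt_sq_sub_one_pos hc
  rw [smallRoot]; nlinarith

lemma smallRoot_add_inv (hc : 1 < c) : smallRoot c + (smallRoot c)⁻¹ = 2 * c := by
  have hinv : (smallRoot c)⁻¹ = c + √(c ^ 2 - 1) := by
    refine inv_eq_of_mul_eq_one_right ?_
    rw [smallRoot]
    linear_combination -sq_sqrt_sq_sub_one hc
  rw [hinv, smallRoot]; ring

lemma hasSum_smallRoot_pow_natAbs_div (hc : 1 < c) :
    HasSum (fun k : ℤ => smallRoot c ^ k.natAbs / √(c ^ 2 - 1)) (1 / (c - 1)) := by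
  have h₁ := smallRoot_lt_one hc
  have hgeom := hasSum_geometric_of_lt_one (smallRoot_pos hc).le h₁
  set f : ℤ → ℝ := fun k => smallRoot c ^ k.natAbs / √(c ^ 2 - 1)
  have hnat : HasSum (fun n : ℕ => f n) ((1 - smallRoot c)⁻¹ / √(c ^ 2 - 1)) := by
    simpa [f] using hgeom.div_const (√(c ^ 2 - 1))
  have hneg : HasSum (fun n : ℕ => f (-(n + 1)))
      (smallRoot c * (1 - smallRoot c)⁻¹ / √(c ^ 2 - 1)) := by
    have hf (n : ℕ) : f (-(n + 1)) = smallRoot c * smallRoot c ^ n / √(c ^ 2 - 1) := by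
      simp only [f]
      rw [show (-((n : ℤ) + 1)).natAbs = n + 1 by omega, pow_succ, mul_comm]
    simpa only [hf] using (hgeom.mul_left (smallRoot c)).div_const (√(c ^ 2 - 1))
  convert hnat.of_nat_of_neg_add_one hneg using 1
  have := sqrt_sq_sub_one_pos hc
  have : 1 - smallRoot c ≠ 0 := by linarith
  have : c - 1 ≠ 0 := by linarith
  field_simp
  rw [smallRoot]
  linear_combination sq_sqrt_sq_sub_one hc

lemma sub_cos_pos (hc : 1 < c) (t : ℝ) : 0 < c - cos t := by linarith [cos_le_one t]

lemma intervalIntegrable_cos_mul_div_sub_cos (hc : 1 < c) (s : ℝ) {a b : ℝ} :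
    IntervalIntegrable (fun t => cos (s * t) / (c - cos t)) volume a b :=
  (continuous_iff_continuousAt.mpr fun t =>
    (by fun_prop : Continuous fun t => cos (s * t)).continuousAt.div (by fun_prop)
      (sub_cos_pos hc t).ne').intervalIntegrable a b

lemma integral_cos_mul_cos_div_sub_cos (hc : 1 < c) (m : ℕ) :
    ∫ t in (-π)..π, cos (m * t) * cos t / (c - cos t) =
      c * poissonCoeff c m - if m = 0 then 2 * π else 0 := by
  have hsplit : ∀ t, cos (m * t) * cos t / (c - cos t) =
      c * (cos (m * t) / (c - cos t)) - cos (0 + (m : ℤ) * t) := fun t => by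
    have := (sub_cos_pos hc t).ne'
    rw [zero_add, Int.cast_natCast]
    field_simp
    ring
  simp_rw [hsplit]
  rw [intervalIntegral.integral_sub ((intervalIntegrable_cos_mul_div_sub_cos hc _).const_mul c)
      (Continuous.intervalIntegrable (by fun_prop) _ _), intervalIntegral.integral_const_mul,
    integral_cos_add_int_mul, poissonCoeff]
  simp

lemma abs_poissonCoeff_le (hc : 1 < c) (j : ℕ) : |poissonCoeff c j| ≤ poissonCoeff c 0 := by
  refine (intervalIntegral.abs_integral_le_integral_abs (by linarith [pi_pos])).trans ?_
  refine intervalIntegral.integral_mono_on (by linarith [pi_pos])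
    (intervalIntegrable_cos_mul_div_sub_cos hc _).abs
    (intervalIntegrable_cos_mul_div_sub_cos hc _) fun t _ => ?_
  rw [abs_div, abs_of_pos (sub_cos_pos hc t), Nat.cast_zero, zero_mul, cos_zero]
  exact div_le_div_of_nonneg_right (abs_cos_le_one _) (sub_cos_pos hc t).le

lemma poissonCoeff_one (hc : 1 < c) : poissonCoeff c 1 = c * poissonCoeff c 0 - 2 * π := by
  simpa [poissonCoeff] using integral_cos_mul_cos_div_sub_cos hc 0

lemma poissonCoeff_add_two (hc : 1 < c) (j : ℕ) :
    poissonCoeff c (j + 2) + poissonCoeff c j = 2 * c * poissonCoeff c (j + 1) := by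
  have htrig : ∀ t, cos ((j + 2 : ℕ) * t) / (c - cos t) + cos (j * t) / (c - cos t) =
      2 * (cos ((j + 1 : ℕ) * t) * cos t / (c - cos t)) := fun t => by
    rw [← add_div, mul_div_assoc', ← mul_assoc]
    congr 1
    push_cast
    rw [show ((j : ℝ) + 2) * t = (j + 1) * t + t by ring,
      show (j : ℝ) * t = (j + 1) * t - t by ring, cos_add, cos_sub]
    ring
  rw [poissonCoeff, poissonCoeff, ← intervalIntegral.integral_add
    (intervalIntegrable_cos_mul_div_sub_cos hc _) (intervalIntegrable_cos_mul_div_sub_cos hc _)]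
  simp_rw [htrig]
  rw [intervalIntegral.integral_const_mul, integral_cos_mul_cos_div_sub_cos hc,
    if_neg j.succ_ne_zero]
  ring

lemma poissonCoeff_eq (hc : 1 < c) (j : ℕ) :
    poissonCoeff c j = 2 * π * smallRoot c ^ j / √(c ^ 2 - 1) := by
  have hgeom := eq_pow_mul_of_bounded_recurrence (smallRoot_pos hc) (smallRoot_lt_one hc)
    (fun j => by rw [smallRoot_add_inv hc]; exact poissonCoeff_add_two hc j)
    (abs_poissonCoeff_le hc)
  have h0 : poissonCoeff c 0 = 2 * π / √(c ^ 2 - 1) := by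
    have h1 := hgeom 1
    rw [poissonCoeff_one hc, smallRoot] at h1
    have := sqrt_sq_sub_one_pos hc
    field_simp
    linarith
  rw [hgeom j, h0]; ring

end PoissonIntegral

/-! ### The transverse parameter `κ` -/

def kappa (θ : ℝ × ℝ) : ℝ := 3 - cos θ.1 - cos θ.2

def puncturedCircle : Set ℝ := Ioo (-π) π \ {0}

def puncturedTorus : Set (ℝ × ℝ) := puncturedCircle ×ˢ puncturedCircle

def invSqrtBound (θ : ℝ × ℝ) : ℝ := π * ((√|θ.1|)⁻¹ * (√|θ.2|)⁻¹)

@[fun_prop]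
lemma continuous_kappa : Continuous kappa := by unfold kappa; fun_prop

lemma three_mul_one_sub_charFun3 (θ : ℝ × ℝ) (t : ℝ) :
    3 * (1 - charFun3 (θ, t)) = kappa θ - cos t := by
  simp only [charFun3, kappa]; ring

lemma two_mul_one_sub_charFun2 (θ : ℝ × ℝ) : 2 * (1 - charFun2 θ) = kappa θ - 1 := by
  simp only [charFun2, kappa]; ring

lemma ae_mem_puncturedCircle : ∀ᵐ t ∂torus1, t ∈ puncturedCircle := by
  filter_upwards [ae_restrict_mem measurableSet_Ioc,
    ae_restrict_of_ae ((toFinite {0, π}).countable.ae_notMem volume)] with t h1 h2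
  simp only [mem_insert_iff, mem_singleton_iff, not_or] at h2
  exact ⟨⟨h1.1, lt_of_le_of_ne h1.2 h2.2⟩, h2.1⟩

lemma ae_mem_puncturedTorus : ∀ᵐ θ ∂torus2, θ ∈ puncturedTorus := by
  filter_upwards [Measure.quasiMeasurePreserving_fst.ae ae_mem_puncturedCircle,
    Measure.quasiMeasurePreserving_snd.ae ae_mem_puncturedCircle] with θ h1 h2
  exact ⟨h1, h2⟩

lemma abs_le_pi_of_mem_puncturedCircle {t : ℝ} (ht : t ∈ puncturedCircle) : |t| ≤ π :=
  abs_le.mpr ⟨ht.1.1.le, ht.1.2.le⟩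

lemma abs_cos_lt_one_of_mem_puncturedCircle {t : ℝ} (ht : t ∈ puncturedCircle) :
    |cos t| < 1 := by
  have : 0 < cos (t / 2) := cos_pos_of_mem_Ioo ⟨by linarith [ht.1.1], by linarith [ht.1.2]⟩
  have := cos_sq (t / 2)
  rw [mul_div_cancel₀ t two_ne_zero] at this
  have := cos_le_one_sub_mul_cos_sq (abs_le_pi_of_mem_puncturedCircle ht)
  have ht0 : t ≠ 0 := ht.2
  have : 0 < 2 / π ^ 2 * t ^ 2 := by positivity
  exact abs_lt.mpr ⟨by nlinarith, by linarith⟩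

section PuncturedTorus

variable {θ : ℝ × ℝ}

lemma one_lt_kappa (h : θ ∈ puncturedTorus) : 1 < kappa θ := by
  have h1 := abs_lt.mp (abs_cos_lt_one_of_mem_puncturedCircle h.1)
  have h2 := abs_lt.mp (abs_cos_lt_one_of_mem_puncturedCircle h.2)
  rw [kappa]; linarith

lemma abs_charFun2_lt_one (h : θ ∈ puncturedTorus) : |charFun2 θ| < 1 := by
  have h1 := abs_lt.mp (abs_cos_lt_one_of_mem_puncturedCircle h.1)
  have h2 := abs_lt.mp (abs_cos_lt_one_of_mem_puncturedCircle h.2)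
  rw [abs_lt, charFun2]; constructor <;> linarith

lemma sq_add_sq_le_kappa_sub_one (h : θ ∈ puncturedTorus) :
    2 / π ^ 2 * (θ.1 ^ 2 + θ.2 ^ 2) ≤ kappa θ - 1 := by
  have := cos_le_one_sub_mul_cos_sq (abs_le_pi_of_mem_puncturedCircle h.1)
  have := cos_le_one_sub_mul_cos_sq (abs_le_pi_of_mem_puncturedCircle h.2)
  rw [kappa]; linarith

lemma sqrt_abs_mul_sqrt_abs_le (h : θ ∈ puncturedTorus) :
    √|θ.1| * √|θ.2| ≤ π * √(kappa θ ^ 2 - 1) := by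
  have hκ := sq_add_sq_le_kappa_sub_one h
  have h1 := one_lt_kappa h
  have hamgm : 2 * (|θ.1| * |θ.2|) ≤ θ.1 ^ 2 + θ.2 ^ 2 := by
    nlinarith [sq_nonneg (|θ.1| - |θ.2|), sq_abs θ.1, sq_abs θ.2]
  have hπ : 0 < π ^ 2 := by positivity
  calc √|θ.1| * √|θ.2| = √(|θ.1| * |θ.2|) := (sqrt_mul (abs_nonneg _) _).symm
    _ ≤ √(π ^ 2 * (kappa θ ^ 2 - 1)) := by
        refine sqrt_le_sqrt ?_
        rw [div_mul_eq_mul_div, div_le_iff₀ hπ] at hκ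
        nlinarith
    _ = π * √(kappa θ ^ 2 - 1) := by rw [sqrt_mul (sq_nonneg _), sqrt_sq pi_pos.le]

lemma inv_sqrt_kappa_sq_sub_one_le (h : θ ∈ puncturedTorus) :
    (√(kappa θ ^ 2 - 1))⁻¹ ≤ invSqrtBound θ := by
  have h1 : 0 < √|θ.1| := sqrt_pos.mpr (abs_pos.mpr h.1.2)
  have h2 : 0 < √|θ.2| := sqrt_pos.mpr (abs_pos.mpr h.2.2)
  rw [invSqrtBound, ← mul_inv, ← div_eq_mul_inv, inv_eq_one_div,
    div_le_div_iff₀ (sqrt_sq_sub_one_pos (one_lt_kappa h)) (by positivity), one_mul]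
  exact sqrt_abs_mul_sqrt_abs_le h

lemma one_sub_cos_dot2_div_le (h : θ ∈ puncturedTorus) (y : ℤ × ℤ) :
    (1 - cos (dot2 y θ)) / (kappa θ - 1) ≤ π ^ 2 / 4 * ((y.1 : ℝ) ^ 2 + y.2 ^ 2) := by
  have hκ := sq_add_sq_le_kappa_sub_one h
  have hcos : 1 - cos (dot2 y θ) ≤ ((y.1 : ℝ) ^ 2 + y.2 ^ 2) * (θ.1 ^ 2 + θ.2 ^ 2) / 2 := by
    have := one_sub_sq_div_two_le_cos (x := dot2 y θ)
    have : dot2 y θ ^ 2 ≤ ((y.1 : ℝ) ^ 2 + y.2 ^ 2) * (θ.1 ^ 2 + θ.2 ^ 2) := by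
      rw [dot2]; nlinarith [sq_nonneg ((y.1 : ℝ) * θ.2 - y.2 * θ.1)]
    linarith
  have hπ : 0 < π ^ 2 := by positivity
  rw [div_mul_eq_mul_div, div_le_iff₀ hπ] at hκ
  rw [div_le_iff₀ (by linarith [one_lt_kappa h])]
  calc 1 - cos (dot2 y θ) ≤ ((y.1 : ℝ) ^ 2 + y.2 ^ 2) * (θ.1 ^ 2 + θ.2 ^ 2) / 2 := hcos
    _ ≤ ((y.1 : ℝ) ^ 2 + y.2 ^ 2) * ((kappa θ - 1) * π ^ 2 / 2) / 2 := by gcongr; linarith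
    _ = _ := by ring

end PuncturedTorus

lemma integrable_inv_sqrt_abs : Integrable (fun t : ℝ => (√|t|)⁻¹) torus1 := by
  refine integrable_torus1_iff.mpr (intervalIntegrable_of_even (fun t => by rw [abs_neg])
    fun x hx => ?_)
  refine (intervalIntegral.intervalIntegrable_rpow' (r := -(1 / 2)) (by norm_num)).congr
    fun t ht => ?_
  rw [uIoc_of_le hx.le] at ht
  rw [abs_of_pos ht.1, sqrt_eq_rpow, rpow_neg ht.1.le]

lemma integrable_invSqrtBound : Integrable invSqrtBound torus2 :=
  (integrable_inv_sqrt_abs.mul_prod integrable_inv_sqrt_abs).const_mul π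

/-! ### The Green function along a vertical line -/

def greenFiber (k : ℤ) (θ : ℝ × ℝ) : ℝ :=
  6 * π * smallRoot (kappa θ) ^ k.natAbs / √(kappa θ ^ 2 - 1)

@[fun_prop]
lemma measurable_greenFiber (k : ℤ) : Measurable (greenFiber k) := by
  unfold greenFiber; fun_prop

section GreenFiber

variable {θ : ℝ × ℝ}

lemma greenFiber_nonneg (h : 1 < kappa θ) (k : ℤ) : 0 ≤ greenFiber k θ := by
  have := smallRoot_pos h
  unfold greenFiber; positivity

lemma abs_greenFiber_le (h : θ ∈ puncturedTorus) (k : ℤ) :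
    |greenFiber k θ| ≤ 6 * π * invSqrtBound θ := by
  have h1 := one_lt_kappa h
  have h2 := smallRoot_pos h1
  rw [greenFiber, abs_of_nonneg (by positivity), div_eq_mul_inv]
  calc 6 * π * smallRoot (kappa θ) ^ k.natAbs * (√(kappa θ ^ 2 - 1))⁻¹
      ≤ 6 * π * 1 * invSqrtBound θ := by
        gcongr
        · exact pow_le_one₀ h2.le (smallRoot_lt_one h1).le
        · exact inv_sqrt_kappa_sq_sub_one_le h
    _ = _ := by ring

lemma hasSum_greenFiber (h : 1 < kappa θ) :
    HasSum (fun k => greenFiber k θ) (6 * π * (1 / (kappa θ - 1))) := by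
  simpa only [greenFiber, mul_div_assoc] using (hasSum_smallRoot_pow_natAbs_div h).mul_left (6 * π)

lemma integral_cos_div_one_sub_charFun3 (h : 1 < kappa θ) (k : ℤ) :
    ∫ t, cos (k * t) / (1 - charFun3 (θ, t)) ∂torus1 = greenFiber k θ := by
  have hcos : ∀ t : ℝ, cos (k * t) = cos (k.natAbs * t) := fun t => by
    rw [Nat.cast_natAbs, Int.cast_abs]
    rcases abs_choice (k : ℝ) with hk | hk <;> rw [hk]
    rw [neg_mul, cos_neg]
  have hdiv : ∀ t, cos (k * t) / (1 - charFun3 (θ, t)) =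
      3 * (cos (k.natAbs * t) / (kappa θ - cos t)) := fun t => by
    have := sub_cos_pos h t
    rw [← three_mul_one_sub_charFun3] at this ⊢
    rw [hcos]
    field_simp
  simp_rw [hdiv, integral_torus1, intervalIntegral.integral_const_mul]
  rw [← poissonCoeff, poissonCoeff_eq h, greenFiber]
  ring

lemma abs_geom_sum_charFun3_le (h : 1 < kappa θ) (M : ℕ) (t : ℝ) :
    |∑ n ∈ Finset.range M, charFun3 (θ, t) ^ n| ≤ 6 / (kappa θ - cos t) := by
  have hpos : 0 < kappa θ - cos t := sub_cos_pos h t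
  rw [← three_mul_one_sub_charFun3] at hpos ⊢
  calc _ ≤ 2 / (1 - charFun3 (θ, t)) :=
        abs_geom_sum_le (abs_le.mp (abs_charFun3_le_one _)).1 (by linarith) M
    _ = 6 / (3 * (1 - charFun3 (θ, t))) := by field_simp; ring

lemma abs_integral_geom_sum_charFun3_le (h : 1 < kappa θ) (k : ℤ) (M : ℕ) :
    |∫ t, (∑ n ∈ Finset.range M, charFun3 (θ, t) ^ n) * cos (k * t) ∂torus1| ≤
      12 * π / √(kappa θ ^ 2 - 1) := by
  have hmajorant : ∫ t, 6 * (cos ((0 : ℕ) * t) / (kappa θ - cos t)) ∂torus1 =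
      12 * π / √(kappa θ ^ 2 - 1) := by
    rw [integral_torus1, intervalIntegral.integral_const_mul, ← poissonCoeff, poissonCoeff_eq h]
    ring
  rw [← hmajorant, ← Real.norm_eq_abs]
  refine norm_integral_le_of_norm_le (integrable_torus1_iff.mpr
    ((intervalIntegrable_cos_mul_div_sub_cos h _).const_mul 6)) (ae_of_all _ fun t => ?_)
  rw [Nat.cast_zero, zero_mul, cos_zero, norm_mul, Real.norm_eq_abs, Real.norm_eq_abs,
    mul_one_div]
  exact (mul_le_of_le_one_right (abs_nonneg _) (abs_cos_le_one _)).trans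
    (abs_geom_sum_charFun3_le h M t)

lemma tendsto_integral_geom_sum_charFun3 (h : 1 < kappa θ) (k : ℤ) :
    Tendsto (fun M : ℕ => ∫ t, (∑ n ∈ Finset.range M, charFun3 (θ, t) ^ n) * cos (k * t) ∂torus1)
      atTop (𝓝 (greenFiber k θ)) := by
  rw [← integral_cos_div_one_sub_charFun3 h]
  refine tendsto_integral_of_dominated_convergence (fun _ => 6 / (kappa θ - 1))
    (fun M => (Continuous.aestronglyMeasurable (by fun_prop))) (integrable_const _)
    (fun M => ae_of_all _ fun t => ?_) ?_
  · rw [norm_mul, Real.norm_eq_abs, Real.norm_eq_abs]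
    exact (mul_le_of_le_one_right (abs_nonneg _) (abs_cos_le_one _)).trans
      ((abs_geom_sum_charFun3_le h M t).trans
        (div_le_div_of_nonneg_left (by norm_num) (by linarith) (by linarith [cos_le_one t])))
  · filter_upwards [ae_mem_puncturedCircle] with t ht
    have hlt : |charFun3 (θ, t)| < 1 := by
      have h1 := sub_cos_pos h t
      rw [← three_mul_one_sub_charFun3] at h1
      have h2 := (abs_lt.mp (abs_cos_lt_one_of_mem_puncturedCircle ht)).1
      have h3 : -1 < charFun3 (θ, t) := by
        simp only [charFun3]; linarith [neg_one_le_cos θ.1, neg_one_le_cos θ.2]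
      exact abs_lt.mpr ⟨h3, by linarith⟩
    simpa [div_eq_inv_mul] using
      (hasSum_geometric_of_abs_lt_one hlt).tendsto_sum_nat.mul_const (cos (k * t))

end GreenFiber

lemma sum_range_srw3_eq_integral (w : ℤ × ℤ) (k : ℤ) (M : ℕ) :
    ∑ n ∈ Finset.range M, srw3 n (w, k) = ((2 * π) ^ 3)⁻¹ * ∫ θ, cos (dot2 w θ) *
      ∫ t, (∑ n ∈ Finset.range M, charFun3 (θ, t) ^ n) * cos (k * t) ∂torus1 ∂torus2 := by
  have hint (n : ℕ) := integrable_pow_mul_cos torus3 continuous_charFun3 abs_charFun3_le_one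
    (continuous_dot3 (w, k)) n
  simp_rw [srw3_eq_integral, ← Finset.mul_sum]
  rw [← integral_finsetSum _ fun n _ => hint n, torus3, integral_prod _
    (integrable_finsetSum _ fun n _ => hint n)]
  congr 1
  refine integral_congr_ae (ae_of_all _ fun θ => ?_)
  simp only [← Finset.sum_mul, dot3]
  exact integral_torus1_even_mul_cos_add
    (f := fun t => ∑ n ∈ Finset.range M, charFun3 (θ, t) ^ n) (by fun_prop)
    (fun t => by simp [charFun3]) _ _

lemma hasSum_srw3 (w : ℤ × ℤ) (k : ℤ) :
    HasSum (fun n => srw3 n (w, k))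
      (((2 * π) ^ 3)⁻¹ * ∫ θ, cos (dot2 w θ) * greenFiber k θ ∂torus2) := by
  rw [hasSum_iff_tendsto_nat_of_nonneg (fun n => srw3_nonneg n _)]
  simp_rw [sum_range_srw3_eq_integral]
  refine (tendsto_integral_of_dominated_convergence (fun θ => 12 * π * invSqrtBound θ)
    (fun M => ?_) (integrable_invSqrtBound.const_mul _) (fun M => ?_) ?_).const_mul _
  · exact (continuous_cos.comp (continuous_dot2 w)).aestronglyMeasurable.mul
      (StronglyMeasurable.integral_prod_right' (f := fun ξ : (ℝ × ℝ) × ℝ =>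
        (∑ n ∈ Finset.range M, charFun3 ξ ^ n) * cos (k * ξ.2))
        (Continuous.stronglyMeasurable (by fun_prop))).aestronglyMeasurable
  · filter_upwards [ae_mem_puncturedTorus] with θ h
    rw [norm_mul, Real.norm_eq_abs, Real.norm_eq_abs]
    refine (mul_le_of_le_one_left (abs_nonneg _) (abs_cos_le_one _)).trans
      ((abs_integral_geom_sum_charFun3_le (one_lt_kappa h) k M).trans ?_)
    rw [div_eq_mul_inv]
    gcongr
    exact inv_sqrt_kappa_sq_sub_one_le h
  · filter_upwards [ae_mem_puncturedTorus] with θ h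
    exact (tendsto_integral_geom_sum_charFun3 (one_lt_kappa h) k).const_mul _

lemma green3_eq_integral (w : ℤ × ℤ) (k : ℤ) :
    green3 (w, k) = ((2 * π) ^ 3)⁻¹ * ∫ θ, cos (dot2 w θ) * greenFiber k θ ∂torus2 :=
  (hasSum_srw3 w k).tsum_eq

lemma integrable_cos_dot2_mul_greenFiber (w : ℤ × ℤ) (k : ℤ) :
    Integrable (fun θ => cos (dot2 w θ) * greenFiber k θ) torus2 := by
  refine (integrable_invSqrtBound.const_mul (6 * π)).mono' (by fun_prop) ?_
  filter_upwards [ae_mem_puncturedTorus] with θ h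
  rw [norm_mul, Real.norm_eq_abs, Real.norm_eq_abs]
  exact (mul_le_of_le_one_left (abs_nonneg _) (abs_cos_le_one _)).trans (abs_greenFiber_le h k)

lemma green3_sub_eq_integral (y : ℤ × ℤ) (k : ℤ) :
    green3 (0, k) - green3 (y, k) =
      ((2 * π) ^ 3)⁻¹ * ∫ θ, (1 - cos (dot2 y θ)) * greenFiber k θ ∂torus2 := by
  rw [green3_eq_integral, green3_eq_integral, ← mul_sub,
    ← integral_sub (integrable_cos_dot2_mul_greenFiber 0 k)
      (integrable_cos_dot2_mul_greenFiber y k)]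
  simp [dot2, sub_mul]

/-! ### The potential kernel and the sum along the rod -/

lemma sum_range_srw2_sub_eq_integral (y : ℤ × ℤ) (m : ℕ) :
    ∑ j ∈ Finset.range m, (srw2 j 0 - srw2 j y) = ((2 * π) ^ 2)⁻¹ *
      ∫ θ, (∑ j ∈ Finset.range m, charFun2 θ ^ j) * (1 - cos (dot2 y θ)) ∂torus2 := by
  have hint (j : ℕ) (y' : ℤ × ℤ) := integrable_pow_mul_cos torus2 continuous_charFun2
    abs_charFun2_le_one (continuous_dot2 y') j
  have hdiff : ∀ j θ, charFun2 θ ^ j * cos (dot2 0 θ) - charFun2 θ ^ j * cos (dot2 y θ) =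
      charFun2 θ ^ j * (1 - cos (dot2 y θ)) := fun j θ => by simp [dot2, mul_sub]
  simp_rw [srw2_eq_integral, ← mul_sub, ← integral_sub (hint _ 0) (hint _ y), hdiff,
    ← Finset.mul_sum, Finset.sum_mul]
  rw [integral_finsetSum _ fun j _ => ((hint j 0).sub (hint j y)).congr
    (ae_of_all _ (hdiff j))]

lemma aker_eq_integral (y : ℤ × ℤ) :
    aker y = ((2 * π) ^ 2)⁻¹ * ∫ θ, (1 - cos (dot2 y θ)) / (1 - charFun2 θ) ∂torus2 := by
  have hlim : Tendsto (fun m => ∑ j ∈ Finset.range m, (srw2 j 0 - srw2 j y)) atTop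
      (𝓝 (((2 * π) ^ 2)⁻¹ * ∫ θ, (1 - cos (dot2 y θ)) / (1 - charFun2 θ) ∂torus2)) := by
    simp_rw [sum_range_srw2_sub_eq_integral]
    refine (tendsto_integral_of_dominated_convergence
      (fun _ => π ^ 2 * ((y.1 : ℝ) ^ 2 + y.2 ^ 2))
      (fun m => Continuous.aestronglyMeasurable (by fun_prop)) (integrable_const _)
      (fun m => ?_) ?_).const_mul _
    · filter_upwards [ae_mem_puncturedTorus] with θ h
      have hκ := two_mul_one_sub_charFun2 θ
      have hs : 0 < 1 - charFun2 θ := by linarith [one_lt_kappa h]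
      have hc : 0 ≤ 1 - cos (dot2 y θ) := by linarith [cos_le_one (dot2 y θ)]
      rw [norm_mul, Real.norm_eq_abs, Real.norm_eq_abs, abs_of_nonneg hc]
      calc _ ≤ 2 / (1 - charFun2 θ) * (1 - cos (dot2 y θ)) := by
            gcongr
            exact abs_geom_sum_le (abs_le.mp (abs_charFun2_le_one θ)).1 (by linarith) m
        _ = 4 * ((1 - cos (dot2 y θ)) / (kappa θ - 1)) := by
            rw [← hκ]; field_simp; ring
        _ ≤ 4 * (π ^ 2 / 4 * ((y.1 : ℝ) ^ 2 + y.2 ^ 2)) := by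
            gcongr; exact one_sub_cos_dot2_div_le h y
        _ = _ := by ring
    · filter_upwards [ae_mem_puncturedTorus] with θ h
      simpa [div_eq_inv_mul] using (hasSum_geometric_of_abs_lt_one
        (abs_charFun2_lt_one h)).tendsto_sum_nat.mul_const (1 - cos (dot2 y θ))
  exact (hlim.comp (tendsto_add_atTop_nat 1)).limUnder_eq

lemma ae_one_sub_cos_mul_greenFiber_nonneg (y : ℤ × ℤ) (k : ℤ) :
    ∀ᵐ θ ∂torus2, 0 ≤ (1 - cos (dot2 y θ)) * greenFiber k θ := by
  filter_upwards [ae_mem_puncturedTorus] with θ h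
  exact mul_nonneg (by linarith [cos_le_one (dot2 y θ)]) (greenFiber_nonneg (one_lt_kappa h) k)

lemma green3_sub_nonneg (y : ℤ × ℤ) (k : ℤ) : 0 ≤ green3 (0, k) - green3 (y, k) := by
  rw [green3_sub_eq_integral]
  exact mul_nonneg (by positivity)
    (integral_nonneg_of_ae (ae_one_sub_cos_mul_greenFiber_nonneg y k))

lemma hasSum_green3_sub (y : ℤ × ℤ) :
    HasSum (fun k : ℤ => green3 (0, k) - green3 (y, k)) (3 / 2 * aker y) := by
  set F : ℤ → ℝ × ℝ → ℝ := fun k θ => (1 - cos (dot2 y θ)) * greenFiber k θ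
  set f : ℝ × ℝ → ℝ := fun θ => (1 - cos (dot2 y θ)) * (6 * π * (1 / (kappa θ - 1)))
  have hF : ∀ᵐ θ ∂torus2, HasSum (fun k => F k θ) (f θ) :=
    ae_mem_puncturedTorus.mono fun θ h => (hasSum_greenFiber (one_lt_kappa h)).mul_left _
  have hf : Integrable f torus2 := by
    refine .of_bound (Measurable.aestronglyMeasurable (by simp only [f]; fun_prop))
      (6 * π * (π ^ 2 / 4 * ((y.1 : ℝ) ^ 2 + y.2 ^ 2))) ?_
    filter_upwards [ae_mem_puncturedTorus] with θ h
    have h1 := one_lt_kappa h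
    have hc : 0 ≤ 1 - cos (dot2 y θ) := by linarith [cos_le_one (dot2 y θ)]
    rw [Real.norm_eq_abs, abs_of_nonneg (by simp only [f]; have := pi_pos; positivity)]
    calc f θ = 6 * π * ((1 - cos (dot2 y θ)) / (kappa θ - 1)) := by simp only [f]; ring
      _ ≤ _ := by gcongr; exact one_sub_cos_dot2_div_le h y
  have hsum := hasSum_integral_of_dominated_convergence F
    (fun k => (by fun_prop : Measurable (F k)).aestronglyMeasurable)
    (fun k => (ae_one_sub_cos_mul_greenFiber_nonneg y k).mono fun θ h => (norm_of_nonneg h).le)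
    (hF.mono fun θ h => h.summable) (hf.congr (hF.mono fun θ h => h.tsum_eq.symm)) hF
  have htotal : 3 / 2 * aker y = ((2 * π) ^ 3)⁻¹ * ∫ θ, f θ ∂torus2 := by
    have hfθ : ∀ θ, f θ = 3 * π * ((1 - cos (dot2 y θ)) / (1 - charFun2 θ)) := fun θ => by
      simp only [f, ← two_mul_one_sub_charFun2, one_div, mul_inv]; ring
    simp_rw [aker_eq_integral, hfθ, integral_const_mul]
    field_simp
  simp_rw [green3_sub_eq_integral, htotal]
  exact hsum.mul_left _

end RodPotential

/-- For each `y ∈ ℤ²` there is a nonnegative `ψ_y` tending to `0` at infinity such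
that for `N > 1` and `z ∈ {1,…,N}`, with `x = (0,z) ∈ J₀`,
`0 ≤ (3/2) a(y) - (∑_{x' ∈ J₀} g(x,x') - ∑_{x'' ∈ J_y} g(x,x'')) ≤ ψ_y(d(z, Jᶜ))`. -/
theorem rod_potential_difference (y : ℤ × ℤ) :
    ∃ ψ : ℕ → ℝ, (∀ r, 0 ≤ ψ r) ∧ Tendsto ψ atTop (nhds 0) ∧
      ∀ N : ℕ, 1 < N → ∀ z ∈ JN N,
        0 ≤ (3 / 2) * aker y -
            (∑ z' ∈ JN N, green3 ((0 : ℤ × ℤ), z' - z) -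
              ∑ z' ∈ JN N, green3 (y, z' - z)) ∧
          (3 / 2) * aker y -
              (∑ z' ∈ JN N, green3 ((0 : ℤ × ℤ), z' - z) -
                ∑ z' ∈ JN N, green3 (y, z' - z)) ≤
            ψ (min z ((N : ℤ) + 1 - z)).toNat := by
  set d : ℤ → ℝ := fun k => green3 (0, k) - green3 (y, k)
  have hd : HasSum d (3 / 2 * aker y) := RodPotential.hasSum_green3_sub y
  have hd0 : ∀ k, 0 ≤ d k := RodPotential.green3_sub_nonneg y
  refine ⟨fun r => 3 / 2 * aker y - ∑ k ∈ Finset.Ioo (-(r : ℤ)) r, d k,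
    fun r => sub_nonneg.mpr (sum_le_hasSum _ (fun k _ => hd0 k) hd), ?_, ?_⟩
  · simpa using (hd.comp Finset.tendsto_Ioo_neg).const_sub (3 / 2 * aker y)
  intro N _ z hz
  rw [JN, Finset.mem_Icc] at hz
  set S := (JN N).map (Equiv.subRight z).toEmbedding
  have hS : ∑ z' ∈ JN N, green3 (0, z' - z) - ∑ z' ∈ JN N, green3 (y, z' - z) =
      ∑ k ∈ S, d k := by
    rw [Finset.sum_map, ← Finset.sum_sub_distrib]; rfl
  have hr : ((min z (N + 1 - z)).toNat : ℤ) = min z (N + 1 - z) :=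
    Int.toNat_of_nonneg (by omega)
  have hsub : Finset.Ioo (-((min z (N + 1 - z)).toNat : ℤ)) (min z (N + 1 - z)).toNat ⊆ S :=
    fun k hk => by
      rw [Finset.mem_Ioo, hr] at hk
      simp only [S, Finset.mem_map_equiv, JN, Finset.mem_Icc, Equiv.subRight_symm_apply]
      omega
  rw [hS]
  exact ⟨sub_nonneg.mpr (sum_le_hasSum _ (fun k _ => hd0 k) hd),
    by linarith [Finset.sum_le_sum_of_subset_of_nonneg hsub (fun k _ _ => hd0 k)]⟩
end
end
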